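/- arXiv:2212.02443 — 5 statements merged into one kernel-verified Lean document; each statement's English description precedes it below -/
import Mathlib

section
/- For every bivariate copula C, Spearman's rho and Spearman's footrule satisfy the inequality (2√3/9)·(1 + 2·φ(C))^{3/2} − 1 ≤ ρ(C). -/
open MeasureTheory Set

noncomputable section

/-- A bivariate copula on `[0,1]²`. -/
def IsCopula (C : ℝ → ℝ → ℝ) : Prop :=
  (∀ u ∈ Icc (0:ℝ) 1, ∀ v ∈ Icc (0:ℝ) 1, C u v ∈ Icc (0:ℝ) 1) ∧
  (∀ u ∈ Icc (0:ℝ) 1, C u 0 = 0 ∧ C 0 u = 0 ∧ C u 1 = u ∧ C 1 u = u) ∧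
  (∀ u₁ u₂ v₁ v₂ : ℝ, 0 ≤ u₁ → u₁ ≤ u₂ → u₂ ≤ 1 → 0 ≤ v₁ → v₁ ≤ v₂ → v₂ ≤ 1 →
    0 ≤ C u₂ v₂ - C u₂ v₁ - C u₁ v₂ + C u₁ v₁)

/-- Spearman's rho of a copula. -/
def spearmanRho (C : ℝ → ℝ → ℝ) : ℝ :=
  12 * (∫ u in (0:ℝ)..1, ∫ v in (0:ℝ)..1, C u v) - 3

/-- Spearman's footrule of a copula. -/
def spearmanFootrule (C : ℝ → ℝ → ℝ) : ℝ :=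
  6 * (∫ u in (0:ℝ)..1, C u u) - 2

/-
Write `δ t = C t t` for the diagonal. For fixed `t`, the section `C t ·` is bounded below using
only `δ t`, monotonicity, the Lipschitz property and the Fréchet bound `W`; integrating gives
`∫ C t · ≥ δ² + (1 - 2t) δ + t²/2`. In terms of the excess `h = δ - W(t,t) ≥ 0` this reads
`h² + |1 - 2t| h + t²/2`, and a pointwise completion of the square against `max (L - |1 - 2t|) 0`
with the optimal `L = 2 √(∫ h)` gives `∫ (h² + |1 - 2t| h) ≥ (4/3) (∫ h)^{3/2}`. Both Spearman's
rho and the footrule are affine in these integrals, since `1 + 2 φ = 12 ∫ h`.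
-/

lemma intervalIntegral.le_integral_of_mul_add_le {f : ℝ → ℝ} {a b k c : ℝ} (hab : a ≤ b)
    (hf : IntervalIntegrable f volume a b) (h : ∀ v ∈ Icc a b, k * v + c ≤ f v) :
    (b - a) * (k * (a + b) / 2 + c) ≤ ∫ v in a..b, f v := by
  have hint : ∫ v in a..b, (k * v + c) = (b - a) * (k * (a + b) / 2 + c) := by
    rw [intervalIntegral.integral_add (intervalIntegral.intervalIntegrable_id.const_mul k)
      intervalIntegrable_const, intervalIntegral.integral_const_mul, integral_id,
      intervalIntegral.integral_const, smul_eq_mul]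
    ring
  rw [← hint]
  exact intervalIntegral.integral_mono_on hab
    ((intervalIntegral.intervalIntegrable_id.const_mul k).add intervalIntegrable_const) hf h

lemma intervalIntegral.integral_comp_abs_one_sub_two_mul {g : ℝ → ℝ} (hg : Continuous g) :
    ∫ t in (0:ℝ)..1, g |1 - 2 * t| = ∫ x in (0:ℝ)..1, g x := by
  have hc : Continuous fun t : ℝ => g |1 - 2 * t| := by fun_prop
  rw [← intervalIntegral.integral_add_adjacent_intervals (b := 1 / 2)
    (hc.intervalIntegrable _ _) (hc.intervalIntegrable _ _)]
  have left : ∫ t in (0:ℝ)..1 / 2, g |1 - 2 * t| = ∫ t in (0:ℝ)..1 / 2, g (1 - 2 * t) := by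
    refine intervalIntegral.integral_congr fun t ht => ?_
    rw [uIcc_of_le (by norm_num)] at ht
    simp only [abs_of_nonneg (by linarith [ht.2] : (0:ℝ) ≤ 1 - 2 * t)]
  have right : ∫ t in (1 / 2 : ℝ)..1, g |1 - 2 * t| = ∫ t in (1 / 2 : ℝ)..1, g (2 * t - 1) := by
    refine intervalIntegral.integral_congr fun t ht => ?_
    rw [uIcc_of_le (by norm_num)] at ht
    simp only [abs_of_nonpos (by linarith [ht.1] : 1 - 2 * t ≤ 0), neg_sub]
  rw [left, right, intervalIntegral.integral_comp_sub_mul _ two_ne_zero,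
    intervalIntegral.integral_comp_mul_sub _ two_ne_zero]
  norm_num
  ring

lemma integral_max_sub_zero_sq {L : ℝ} (hL : L ∈ Icc (0:ℝ) 1) :
    ∫ x in (0:ℝ)..1, max (L - x) 0 ^ 2 = L ^ 3 / 3 := by
  have hc : Continuous fun x : ℝ => max (L - x) 0 ^ 2 := by fun_prop
  rw [← intervalIntegral.integral_add_adjacent_intervals (b := L)
    (hc.intervalIntegrable _ _) (hc.intervalIntegrable _ _)]
  have left : ∫ x in (0:ℝ)..L, max (L - x) 0 ^ 2 = ∫ x in (0:ℝ)..L, (L - x) ^ 2 := by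
    refine intervalIntegral.integral_congr fun x hx => ?_
    rw [uIcc_of_le hL.1] at hx
    simp only [max_eq_left (sub_nonneg.2 hx.2)]
  have right : ∫ x in L..1, max (L - x) 0 ^ 2 = ∫ x in L..1, (0:ℝ) := by
    refine intervalIntegral.integral_congr fun x hx => ?_
    rw [uIcc_of_le hL.2] at hx
    simp [max_eq_right (sub_nonpos.2 hx.1)]
  rw [left, right, intervalIntegral.integral_comp_sub_left (fun x => x ^ 2)]
  norm_num

lemma integral_max_zero_two_mul_sub_one : ∫ t in (0:ℝ)..1, max 0 (2 * t - 1) = 1 / 4 := by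
  have hpos (t : ℝ) : max 0 (2 * t - 1) = (t - 1 / 2) + |1 - 2 * t| / 2 := by
    rcases le_total 0 (1 - 2 * t) with h | h
    · rw [abs_of_nonneg h, max_eq_left (by linarith)]; ring
    · rw [abs_of_nonpos h, max_eq_right (by linarith)]; ring
  have habs : ∫ t in (0:ℝ)..1, |1 - 2 * t| = 1 / 2 := by
    simpa using intervalIntegral.integral_comp_abs_one_sub_two_mul continuous_id
  simp_rw [hpos]
  rw [intervalIntegral.integral_add (by apply Continuous.intervalIntegrable; fun_prop)
      (by apply Continuous.intervalIntegrable; fun_prop), intervalIntegral.integral_div, habs,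
    intervalIntegral.integral_sub intervalIntegral.intervalIntegrable_id intervalIntegrable_const,
    integral_id, intervalIntegral.integral_const]
  norm_num

lemma two_mul_sqrt_three_div_nine_mul_rpow {e : ℝ} (he : 0 ≤ e) :
    2 * √3 / 9 * (12 * e) ^ ((3:ℝ) / 2) = 16 * e * √e := by
  have h12 : √(12 * e) = 2 * √3 * √e := by
    rw [show (12:ℝ) * e = 2 ^ 2 * 3 * e by ring, Real.sqrt_mul (by positivity),
      Real.sqrt_mul (by positivity), Real.sqrt_sq zero_le_two]
  rw [show (3:ℝ) / 2 = 1 + 1 / 2 by norm_num, Real.rpow_add' (by positivity) (by norm_num),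
    Real.rpow_one, ← Real.sqrt_eq_rpow, h12]
  linear_combination (16 / 3 * e * √e) * Real.sq_sqrt (show (0:ℝ) ≤ 3 by norm_num)

lemma mul_sub_sq_max_div_four_le (L x : ℝ) {y : ℝ} (hy : 0 ≤ y) :
    L * y - max (L - x) 0 ^ 2 / 4 ≤ y ^ 2 + x * y := by
  rcases le_total L x with hLx | hxL
  · rw [max_eq_right (sub_nonpos.2 hLx)]
    nlinarith [mul_nonneg (sub_nonneg.2 hLx) hy]
  · rw [max_eq_left (sub_nonneg.2 hxL)]
    nlinarith [sq_nonneg (y - (L - x) / 2)]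

lemma integral_sq_add_abs_mul_ge {h : ℝ → ℝ} (hc : ContinuousOn h (Icc 0 1))
    (h0 : ∀ t ∈ Icc (0:ℝ) 1, 0 ≤ h t) (hle : ∫ t in (0:ℝ)..1, h t ≤ 1 / 4) :
    4 / 3 * (∫ t in (0:ℝ)..1, h t) * √(∫ t in (0:ℝ)..1, h t) ≤
      ∫ t in (0:ℝ)..1, (h t ^ 2 + |1 - 2 * t| * h t) := by
  set e := ∫ t in (0:ℝ)..1, h t
  have he : 0 ≤ e := intervalIntegral.integral_nonneg zero_le_one h0
  have hse : √e ^ 2 = e := Real.sq_sqrt he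
  -- `L = 2 √e` maximizes `L * e - L ^ 3 / 12`, and `e ≤ 1/4` keeps it in `[0, 1]`.
  set L := 2 * √e
  have hL : L ∈ Icc (0:ℝ) 1 := ⟨by positivity, by nlinarith [Real.sqrt_nonneg e]⟩
  rw [← uIcc_of_le zero_le_one] at hc
  have hq : Continuous fun t : ℝ => max (L - |1 - 2 * t|) 0 ^ 2 / 4 := by fun_prop
  have hint :
      ∫ t in (0:ℝ)..1, (L * h t - max (L - |1 - 2 * t|) 0 ^ 2 / 4) = L * e - L ^ 3 / 12 := by
    rw [intervalIntegral.integral_sub (hc.intervalIntegrable.const_mul L)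
        (hq.intervalIntegrable _ _),
      intervalIntegral.integral_const_mul, intervalIntegral.integral_div,
      intervalIntegral.integral_comp_abs_one_sub_two_mul (g := fun x => max (L - x) 0 ^ 2)
        (by fun_prop), integral_max_sub_zero_sq hL]
    ring
  calc 4 / 3 * e * √e = L * e - L ^ 3 / 12 := by
        linear_combination (2 / 3) * √e * hse
    _ ≤ _ := by
        rw [← hint]
        refine intervalIntegral.integral_mono_on zero_le_one
          ((hc.const_smul L).sub hq.continuousOn).intervalIntegrable
          ((hc.pow 2).add ((by fun_prop : Continuous fun t : ℝ => |1 - 2 * t|).continuousOn.mul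
            hc)).intervalIntegrable
          fun t ht => mul_sub_sq_max_div_four_le L _ (h0 t ht)

/-- `max 0 (2 * t - 1)` is the diagonal of the Fréchet lower bound `W u v = max 0 (u + v - 1)`. -/
def diagExcess (C : ℝ → ℝ → ℝ) (t : ℝ) : ℝ := C t t - max 0 (2 * t - 1)

lemma sq_add_mul_eq_diagExcess (C : ℝ → ℝ → ℝ) (t : ℝ) :
    C t t ^ 2 + (1 - 2 * t) * C t t = diagExcess C t ^ 2 + |1 - 2 * t| * diagExcess C t := by
  unfold diagExcess
  rcases le_total 0 (1 - 2 * t) with h | h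
  · rw [abs_of_nonneg h, max_eq_left (by linarith)]; ring
  · rw [abs_of_nonpos h, max_eq_right (by linarith)]; ring

namespace IsCopula

variable {C : ℝ → ℝ → ℝ}

lemma nonneg (hC : IsCopula C) {u v : ℝ} (hu : u ∈ Icc (0:ℝ) 1) (hv : v ∈ Icc (0:ℝ) 1) :
    0 ≤ C u v :=
  (hC.1 u hu v hv).1

lemma monotoneOn_right (hC : IsCopula C) {u : ℝ} (hu : u ∈ Icc (0:ℝ) 1) :
    MonotoneOn (C u) (Icc 0 1) := by
  intro v hv w hw hvw
  have := hC.2.2 0 u v w le_rfl hu.1 hu.2 hv.1 hvw hw.2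
  linarith [(hC.2.1 v hv).2.1, (hC.2.1 w hw).2.1]

lemma monotoneOn_left (hC : IsCopula C) {v : ℝ} (hv : v ∈ Icc (0:ℝ) 1) :
    MonotoneOn (fun u => C u v) (Icc 0 1) := by
  intro u hu w hw huw
  have := hC.2.2 u w 0 v hu.1 huw hw.2 le_rfl hv.1 hv.2
  linarith [(hC.2.1 u hu).1, (hC.2.1 w hw).1]

lemma sub_le_sub_right (hC : IsCopula C) {u v w : ℝ} (hu : u ∈ Icc (0:ℝ) 1) (hv : v ∈ Icc (0:ℝ) 1)
    (hw : w ∈ Icc (0:ℝ) 1) (hvw : v ≤ w) : C u w - C u v ≤ w - v := by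
  have := hC.2.2 u 1 v w hu.1 hu.2 le_rfl hv.1 hvw hw.2
  linarith [(hC.2.1 v hv).2.2.2, (hC.2.1 w hw).2.2.2]

lemma sub_le_sub_left (hC : IsCopula C) {u v w : ℝ} (hv : v ∈ Icc (0:ℝ) 1) (hu : u ∈ Icc (0:ℝ) 1)
    (hw : w ∈ Icc (0:ℝ) 1) (huw : u ≤ w) : C w v - C u v ≤ w - u := by
  have := hC.2.2 u w v 1 hu.1 huw hw.2 hv.1 hv.2 le_rfl
  linarith [(hC.2.1 u hu).2.2.1, (hC.2.1 w hw).2.2.1]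

lemma frechet_lower (hC : IsCopula C) {u v : ℝ} (hu : u ∈ Icc (0:ℝ) 1) (hv : v ∈ Icc (0:ℝ) 1) :
    u + v - 1 ≤ C u v := by
  have := hC.2.2 u 1 v 1 hu.1 hu.2 le_rfl hv.1 hv.2 le_rfl
  linarith [(hC.2.1 v hv).2.2.2, (hC.2.1 u hu).2.2.1,
    (hC.2.1 1 (right_mem_Icc.2 zero_le_one)).2.2.1]

lemma diag_le (hC : IsCopula C) {t : ℝ} (ht : t ∈ Icc (0:ℝ) 1) : C t t ≤ t := by
  simpa only [(hC.2.1 t ht).2.2.1] using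
    hC.monotoneOn_right ht ht (right_mem_Icc.2 zero_le_one) ht.2

lemma lipschitzOnWith_diag (hC : IsCopula C) : LipschitzOnWith 2 (fun t => C t t) (Icc 0 1) := by
  have key : ∀ s ∈ Icc (0:ℝ) 1, ∀ t ∈ Icc (0:ℝ) 1, s ≤ t → |C t t - C s s| ≤ 2 * |t - s| := by
    intro s hs t ht hst
    have := hC.monotoneOn_left ht hs ht hst
    have := hC.monotoneOn_right hs hs ht hst
    have := hC.sub_le_sub_left ht hs ht hst
    have := hC.sub_le_sub_right hs hs ht hst
    rw [abs_of_nonneg (by linarith), abs_of_nonneg (by linarith)]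
    linarith
  refine LipschitzOnWith.of_dist_le_mul fun x hx y hy => ?_
  simp only [Real.dist_eq, NNReal.coe_ofNat]
  rcases le_total x y with h | h
  · rw [abs_sub_comm, abs_sub_comm x]; exact key x hx y hy h
  · exact key y hy x hx h

lemma intervalIntegrable_right (hC : IsCopula C) {u a b : ℝ} (hu : u ∈ Icc (0:ℝ) 1)
    (ha : a ∈ Icc (0:ℝ) 1) (hb : b ∈ Icc (0:ℝ) 1) : IntervalIntegrable (C u) volume a b := by
  have h01 : IntervalIntegrable (C u) volume 0 1 := by
    apply MonotoneOn.intervalIntegrable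
    rw [uIcc_of_le zero_le_one]
    exact hC.monotoneOn_right hu
  exact h01.mono_set (by rw [uIcc_of_le zero_le_one]; exact uIcc_subset_Icc ha hb)

/-- Pointwise, `C t ·` lies above `v ↦ max 0 (v + δ - t)` on `[0, t]` (Lipschitz in `v`) and above
`v ↦ max δ (t + v - 1)` on `[t, 1]` (monotonicity and the Fréchet bound), where `δ = C t t`. -/
lemma integral_right_ge (hC : IsCopula C) {t : ℝ} (ht : t ∈ Icc (0:ℝ) 1) :
    C t t ^ 2 + (1 - 2 * t) * C t t + t ^ 2 / 2 ≤ ∫ v in (0:ℝ)..1, C t v := by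
  set δ := C t t
  have hδ0 : 0 ≤ δ := hC.nonneg ht ht
  have hδt : δ ≤ t := hC.diag_le ht
  have hδW : t + t - 1 ≤ δ := hC.frechet_lower ht ht
  have h0 : (0:ℝ) ∈ Icc (0:ℝ) 1 := left_mem_Icc.2 zero_le_one
  have h1 : (1:ℝ) ∈ Icc (0:ℝ) 1 := right_mem_Icc.2 zero_le_one
  have ha : t - δ ∈ Icc (0:ℝ) 1 := ⟨by linarith, by linarith [ht.2]⟩
  have hb : 1 - t + δ ∈ Icc (0:ℝ) 1 := ⟨by linarith [ht.2], by linarith⟩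
  have hi {a b : ℝ} (ha : a ∈ Icc (0:ℝ) 1) (hb : b ∈ Icc (0:ℝ) 1) :
      IntervalIntegrable (C t) volume a b :=
    hC.intervalIntegrable_right ht ha hb
  rw [← intervalIntegral.integral_add_adjacent_intervals (hi h0 hb) (hi hb h1),
    ← intervalIntegral.integral_add_adjacent_intervals (hi h0 ht) (hi ht hb),
    ← intervalIntegral.integral_add_adjacent_intervals (hi h0 ha) (hi ha ht)]
  have p1 := intervalIntegral.le_integral_of_mul_add_le (k := 0) (c := 0) ha.1 (hi h0 ha)
    fun v hv => by simpa using hC.nonneg ht ⟨hv.1, hv.2.trans ha.2⟩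
  have p2 := intervalIntegral.le_integral_of_mul_add_le (k := 1) (c := δ - t) (by linarith)
    (hi ha ht)
    fun v hv => by
      have := hC.sub_le_sub_right ht ⟨ha.1.trans hv.1, hv.2.trans ht.2⟩ ht hv.2
      linarith
  have p3 := intervalIntegral.le_integral_of_mul_add_le (k := 0) (c := δ) (by linarith) (hi ht hb)
    fun v hv => by
      simpa using hC.monotoneOn_right ht ht ⟨ht.1.trans hv.1, hv.2.trans hb.2⟩ hv.1
  have p4 := intervalIntegral.le_integral_of_mul_add_le (k := 1) (c := t - 1) hb.2 (hi hb h1)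
    fun v hv => by
      have := hC.frechet_lower ht ⟨hb.1.trans hv.1, hv.2⟩
      linarith
  linarith

lemma diagExcess_nonneg (hC : IsCopula C) {t : ℝ} (ht : t ∈ Icc (0:ℝ) 1) : 0 ≤ diagExcess C t :=
  sub_nonneg.2 (max_le (hC.nonneg ht ht) (by linarith [hC.frechet_lower ht ht]))

lemma continuousOn_diagExcess (hC : IsCopula C) : ContinuousOn (diagExcess C) (Icc 0 1) :=
  hC.lipschitzOnWith_diag.continuousOn.sub (by fun_prop)

lemma intervalIntegrable_diag (hC : IsCopula C) :
    IntervalIntegrable (fun t => C t t) volume 0 1 := by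
  apply ContinuousOn.intervalIntegrable
  rw [uIcc_of_le zero_le_one]
  exact hC.lipschitzOnWith_diag.continuousOn

lemma integral_diagExcess (hC : IsCopula C) :
    ∫ t in (0:ℝ)..1, diagExcess C t = (∫ t in (0:ℝ)..1, C t t) - 1 / 4 := by
  unfold diagExcess
  rw [intervalIntegral.integral_sub hC.intervalIntegrable_diag
      (by apply Continuous.intervalIntegrable; fun_prop),
    integral_max_zero_two_mul_sub_one]

lemma integral_diagExcess_le (hC : IsCopula C) : ∫ t in (0:ℝ)..1, diagExcess C t ≤ 1 / 4 := by
  have : ∫ t in (0:ℝ)..1, C t t ≤ ∫ t in (0:ℝ)..1, t :=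
    intervalIntegral.integral_mono_on zero_le_one hC.intervalIntegrable_diag
      intervalIntegral.intervalIntegrable_id fun t ht => hC.diag_le ht
  rw [integral_id] at this
  linarith [hC.integral_diagExcess]

lemma intervalIntegrable_integral_right (hC : IsCopula C) :
    IntervalIntegrable (fun u => ∫ v in (0:ℝ)..1, C u v) volume 0 1 := by
  have h01 : (0:ℝ) ∈ Icc (0:ℝ) 1 := left_mem_Icc.2 zero_le_one
  have h11 : (1:ℝ) ∈ Icc (0:ℝ) 1 := right_mem_Icc.2 zero_le_one
  apply MonotoneOn.intervalIntegrable
  rw [uIcc_of_le zero_le_one]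
  intro u hu w hw huw
  exact intervalIntegral.integral_mono_on zero_le_one (hC.intervalIntegrable_right hu h01 h11)
    (hC.intervalIntegrable_right hw h01 h11) fun v hv => hC.monotoneOn_left hv hu hw huw

lemma integral_integral_ge (hC : IsCopula C) :
    1 / 6 + 4 / 3 * (∫ t in (0:ℝ)..1, diagExcess C t) * √(∫ t in (0:ℝ)..1, diagExcess C t) ≤
      ∫ u in (0:ℝ)..1, ∫ v in (0:ℝ)..1, C u v := by
  have hcont := hC.continuousOn_diagExcess
  rw [← uIcc_of_le zero_le_one] at hcont
  have hsq : IntervalIntegrable (fun t => diagExcess C t ^ 2 + |1 - 2 * t| * diagExcess C t)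
      volume 0 1 :=
    ((hcont.pow 2).add ((by fun_prop : Continuous fun t : ℝ => |1 - 2 * t|).continuousOn.mul
      hcont)).intervalIntegrable
  have hpoly : IntervalIntegrable (fun t : ℝ => t ^ 2 / 2) volume 0 1 := by
    apply Continuous.intervalIntegrable; fun_prop
  calc _ ≤ 1 / 6 + ∫ t in (0:ℝ)..1, (diagExcess C t ^ 2 + |1 - 2 * t| * diagExcess C t) := by
        gcongr
        exact integral_sq_add_abs_mul_ge hC.continuousOn_diagExcess
          (fun t ht => hC.diagExcess_nonneg ht) hC.integral_diagExcess_le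
    _ = ∫ t in (0:ℝ)..1, (C t t ^ 2 + (1 - 2 * t) * C t t + t ^ 2 / 2) := by
        simp_rw [sq_add_mul_eq_diagExcess]
        rw [intervalIntegral.integral_add hsq hpoly, intervalIntegral.integral_div, integral_pow]
        norm_num
        ring
    _ ≤ _ := by
        refine intervalIntegral.integral_mono_on zero_le_one ?_ hC.intervalIntegrable_integral_right
          fun t ht => hC.integral_right_ge ht
        simp_rw [sq_add_mul_eq_diagExcess]
        exact hsq.add hpoly

end IsCopula

theorem lower_bound_rho_footrule (C : ℝ → ℝ → ℝ) (hC : IsCopula C) :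
    2 * Real.sqrt 3 / 9 * (1 + 2 * spearmanFootrule C) ^ ((3:ℝ)/2) - 1 ≤ spearmanRho C := by
  have hfootrule : 1 + 2 * spearmanFootrule C = 12 * ∫ t in (0:ℝ)..1, diagExcess C t := by
    rw [spearmanFootrule, hC.integral_diagExcess]
    ring
  rw [hfootrule, two_mul_sqrt_three_div_nine_mul_rpow
    (intervalIntegral.integral_nonneg zero_le_one fun t ht => hC.diagExcess_nonneg ht), spearmanRho]
  linarith [hC.integral_integral_ge]
end
end

section
/- For every a ∈ [0, 1/2], the function C_a(u,v) = max{0, u + v − 1, min(u,v) − a} on [0,1]² is a bivariate copula, and it satisfies φ(C_a) = 6a² − 6a + 1 and ρ(C_a) = −16a³ + 24a² − 12a + 1; consequently ρ(C_a) = (2√3/9)·(1 + 2·φ(C_a))^{3/2} − 1, so for every p ∈ [−1/2, 1] the lower bound (2√3/9)·(1+2p)^{3/2} − 1 for ρ given φ = p is attained. -/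
/-!
`C_a` is the shuffle of `M` whose mass is spread uniformly on three segments: the antidiagonals
of the corner squares `[0,a] × [1-a,1]` and `[1-a,1] × [0,a]`, and the diagonal of `[a,1-a]²`.
Accordingly it is the sum of three terms, each a copy of `W(s,t) = (s+t-1)⁺` or of
`(min s t - a)⁺` evaluated at monotone reparametrizations, and all of these are 2-increasing.
Both measures of concordance are integrals of piecewise polynomials; with `s = 1 - 2a` they are
`φ = (3s² - 1)/2` and `ρ = 2s³ - 1`, so `ρ = (2√3/9)(1 + 2φ)^{3/2} - 1` and `p ↦ s = √((1+2p)/3)`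
runs through all `p ∈ [-1/2, 1]`.
-/

open MeasureTheory Set

noncomputable section

/-- The shuffle-of-`M` copula `C_a(u,v) = max {0, u + v - 1, min u v - a}`. -/
def shuffleCa (a : ℝ) : ℝ → ℝ → ℝ := fun u v => max 0 (max (u + v - 1) (min u v - a))

section TwoIncreasing

variable {α β γ δ : Type*} [Preorder α] [Preorder β] [Preorder γ] [Preorder δ]

def IsTwoIncreasing (C : α → β → ℝ) : Prop :=
  ∀ ⦃u₁ u₂ v₁ v₂⦄, u₁ ≤ u₂ → v₁ ≤ v₂ → 0 ≤ C u₂ v₂ - C u₂ v₁ - C u₁ v₂ + C u₁ v₁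

theorem IsTwoIncreasing.add {C D : α → β → ℝ} (hC : IsTwoIncreasing C)
    (hD : IsTwoIncreasing D) : IsTwoIncreasing fun u v => C u v + D u v := by
  intro u₁ u₂ v₁ v₂ hu hv
  linarith [hC hu hv, hD hu hv]

theorem IsTwoIncreasing.comp {C : α → β → ℝ} (hC : IsTwoIncreasing C) {f : γ → α} {g : δ → β}
    (hf : Monotone f) (hg : Monotone g) : IsTwoIncreasing fun x y => C (f x) (g y) :=
  fun _ _ _ _ hx hy => hC (hf hx) (hg hy)

end TwoIncreasing

theorem isTwoIncreasing_posPart_add_sub (c : ℝ) :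
    IsTwoIncreasing fun s t : ℝ => max 0 (s + t - c) := by
  intro s₁ s₂ t₁ t₂ hs ht
  simp only [max_def]
  split_ifs <;> linarith

theorem isTwoIncreasing_posPart_min_sub (c : ℝ) :
    IsTwoIncreasing fun s t : ℝ => max 0 (min s t - c) := by
  intro s₁ s₂ t₁ t₂ hs ht
  simp only [max_def, min_def]
  split_ifs <;> linarith

theorem Continuous.integral_eq_add_adjacent {f : ℝ → ℝ} (hf : Continuous f) (x y z : ℝ) :
    ∫ t in x..z, f t = (∫ t in x..y, f t) + ∫ t in y..z, f t :=
  (intervalIntegral.integral_add_adjacent_intervals (hf.intervalIntegrable x y)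
    (hf.intervalIntegrable y z)).symm

theorem integral_eq_quadratic {f : ℝ → ℝ} {x y : ℝ} (hxy : x ≤ y) (c₂ c₁ c₀ : ℝ)
    (hf : ∀ t ∈ Icc x y, f t = c₂ * t ^ 2 + c₁ * t + c₀) :
    ∫ t in x..y, f t = c₂ * (y ^ 3 - x ^ 3) / 3 + c₁ * (y ^ 2 - x ^ 2) / 2 + c₀ * (y - x) := by
  rw [intervalIntegral.integral_congr (g := fun t => c₂ * t ^ 2 + c₁ * t + c₀)
      (by rwa [uIcc_of_le hxy]),
    intervalIntegral.integral_add (Continuous.intervalIntegrable (by fun_prop) _ _)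
      intervalIntegrable_const,
    intervalIntegral.integral_add (Continuous.intervalIntegrable (by fun_prop) _ _)
      (Continuous.intervalIntegrable (by fun_prop) _ _),
    intervalIntegral.integral_const_mul, intervalIntegral.integral_const_mul, integral_pow,
    integral_id, intervalIntegral.integral_const, smul_eq_mul]
  ring

theorem three_mul_sq_rpow_three_halves {x : ℝ} (hx : 0 ≤ x) :
    (3 * x ^ 2) ^ ((3:ℝ) / 2) = 3 * √3 * x ^ 3 := by
  have h3 : √3 ^ 2 = 3 := Real.sq_sqrt (by norm_num)
  rw [show 3 * x ^ 2 = (√3 * x) ^ 2 by rw [mul_pow, h3], ← Real.rpow_natCast,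
    ← Real.rpow_mul (by positivity)]
  norm_num
  linear_combination √3 * x ^ 3 * h3

section ShuffleCa

variable {a : ℝ}

theorem shuffleCa_eq_sum_of_le (ha : a ≤ 1 / 2) {u v : ℝ} (huv : u ≤ v) :
    shuffleCa a u v = max 0 (min a u + v - 1) + max 0 (min (min u (1 - a)) (min v (1 - a)) - a) +
      max 0 (u + min a v - 1) := by
  rw [shuffleCa, min_eq_left huv, min_eq_left (min_le_min_right (1 - a) huv)]
  simp only [max_def, min_def]
  split_ifs <;> linarith

theorem shuffleCa_comm (u v : ℝ) : shuffleCa a u v = shuffleCa a v u := by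
  simp only [shuffleCa, add_comm u, min_comm u]

theorem shuffleCa_eq_sum (ha : a ≤ 1 / 2) (u v : ℝ) :
    shuffleCa a u v = max 0 (min a u + v - 1) + max 0 (min (min u (1 - a)) (min v (1 - a)) - a) +
      max 0 (u + min a v - 1) := by
  rcases le_total u v with huv | hvu
  · exact shuffleCa_eq_sum_of_le ha huv
  · rw [shuffleCa_comm, shuffleCa_eq_sum_of_le ha hvu, min_comm (min v _),
      add_comm (min a v), add_comm v]
    ring

theorem isTwoIncreasing_shuffleCa (ha : a ≤ 1 / 2) : IsTwoIncreasing (shuffleCa a) := by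
  have W := isTwoIncreasing_posPart_add_sub 1
  have M := isTwoIncreasing_posPart_min_sub a
  have hmin : Monotone fun t : ℝ => min a t := monotone_const.min monotone_id
  have hmin' : Monotone fun t : ℝ => min t (1 - a) := monotone_id.min monotone_const
  rw [funext₂ (shuffleCa_eq_sum ha)]
  exact ((W.comp hmin monotone_id).add (M.comp hmin' hmin')).add (W.comp monotone_id hmin)

theorem isCopula_shuffleCa (ha₀ : 0 ≤ a) (ha₁ : a ≤ 1 / 2) : IsCopula (shuffleCa a) := by
  refine ⟨?_, ?_, fun _ _ _ _ _ hu _ _ hv _ => isTwoIncreasing_shuffleCa ha₁ hu hv⟩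
  · rintro u ⟨hu₀, hu₁⟩ v ⟨hv₀, hv₁⟩
    refine ⟨le_max_left _ _, max_le zero_le_one (max_le (by linarith) ?_)⟩
    linarith [min_le_left u v]
  · rintro u ⟨hu₀, hu₁⟩
    simp only [shuffleCa, min_eq_right hu₀, min_eq_left hu₀, min_eq_left hu₁, min_eq_right hu₁]
    refine ⟨?_, ?_, ?_, ?_⟩ <;> simp only [max_def] <;> split_ifs <;> linarith

theorem continuous_shuffleCa (a : ℝ) : Continuous (Function.uncurry (shuffleCa a)) := by
  unfold shuffleCa Function.uncurry
  fun_prop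

theorem integral_shuffleCa_of_le_or_le (ha : a ≤ 1 / 2) {u : ℝ}
    (hu : u ∈ Icc (0:ℝ) 1) (h : u ≤ a ∨ 1 - a ≤ u) :
    ∫ v in (0:ℝ)..1, shuffleCa a u v = u ^ 2 / 2 := by
  obtain ⟨hu₀, hu₁⟩ := hu
  rw [((continuous_shuffleCa a).uncurry_left u).integral_eq_add_adjacent 0 (1 - u) 1,
    integral_eq_quadratic (by linarith) 0 0 0, integral_eq_quadratic (by linarith) 0 1 (u - 1)]
  · ring
  all_goals
    rintro v ⟨hv₀, hv₁⟩
    rcases h with h | h <;> simp only [shuffleCa, max_def, min_def] <;> split_ifs <;> linarith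

theorem integral_shuffleCa_of_mem (ha₀ : 0 ≤ a) (ha₁ : a ≤ 1 / 2) {u : ℝ}
    (hu : u ∈ Icc a (1 - a)) :
    ∫ v in (0:ℝ)..1, shuffleCa a u v = -u ^ 2 / 2 + u - a + a ^ 2 := by
  obtain ⟨hu₀, hu₁⟩ := hu
  have hc := (continuous_shuffleCa a).uncurry_left u
  rw [hc.integral_eq_add_adjacent 0 a 1, hc.integral_eq_add_adjacent a u 1,
    hc.integral_eq_add_adjacent u (1 - a) 1, integral_eq_quadratic ha₀ 0 0 0,
    integral_eq_quadratic hu₀ 0 1 (-a), integral_eq_quadratic hu₁ 0 0 (u - a),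
    integral_eq_quadratic (by linarith) 0 1 (u - 1)]
  · ring
  all_goals
    rintro v ⟨hv₀, hv₁⟩
    simp only [shuffleCa, max_def, min_def]
    split_ifs <;> linarith

theorem integral_shuffleCa_diag (ha₀ : 0 ≤ a) (ha₁ : a ≤ 1 / 2) :
    ∫ u in (0:ℝ)..1, shuffleCa a u u = a ^ 2 - a + 1 / 2 := by
  have hc : Continuous fun u => shuffleCa a u u :=
    (continuous_shuffleCa a).comp (continuous_id.prodMk continuous_id)
  rw [hc.integral_eq_add_adjacent 0 a 1, hc.integral_eq_add_adjacent a (1 - a) 1,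
    integral_eq_quadratic ha₀ 0 0 0, integral_eq_quadratic (by linarith) 0 1 (-a),
    integral_eq_quadratic (by linarith) 0 2 (-1)]
  · ring
  all_goals
    rintro u ⟨hu₀, hu₁⟩
    simp only [shuffleCa, max_def, min_def]
    split_ifs <;> linarith

theorem integral_integral_shuffleCa (ha₀ : 0 ≤ a) (ha₁ : a ≤ 1 / 2) :
    ∫ u in (0:ℝ)..1, ∫ v in (0:ℝ)..1, shuffleCa a u v =
      (-4 * a ^ 3 + 6 * a ^ 2 - 3 * a + 1) / 3 := by
  have hc : Continuous fun u => ∫ v in (0:ℝ)..1, shuffleCa a u v :=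
    intervalIntegral.continuous_parametric_intervalIntegral_of_continuous'
      (continuous_shuffleCa a) 0 1
  rw [hc.integral_eq_add_adjacent 0 a 1, hc.integral_eq_add_adjacent a (1 - a) 1,
    integral_eq_quadratic ha₀ (1 / 2) 0 0,
    integral_eq_quadratic (by linarith) (-1 / 2) 1 (a ^ 2 - a),
    integral_eq_quadratic (by linarith) (1 / 2) 0 0]
  · ring
  · rintro u ⟨hu₀, hu₁⟩
    rw [integral_shuffleCa_of_le_or_le ha₁ ⟨by linarith, hu₁⟩ (.inr hu₀)]
    ring
  · rintro u hu
    rw [integral_shuffleCa_of_mem ha₀ ha₁ hu]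
    ring
  · rintro u ⟨hu₀, hu₁⟩
    rw [integral_shuffleCa_of_le_or_le ha₁ ⟨hu₀, by linarith⟩ (.inl hu₁)]
    ring

theorem spearmanFootrule_shuffleCa (ha₀ : 0 ≤ a) (ha₁ : a ≤ 1 / 2) :
    spearmanFootrule (shuffleCa a) = 6 * a ^ 2 - 6 * a + 1 := by
  rw [spearmanFootrule, integral_shuffleCa_diag ha₀ ha₁]
  ring

theorem spearmanRho_shuffleCa (ha₀ : 0 ≤ a) (ha₁ : a ≤ 1 / 2) :
    spearmanRho (shuffleCa a) = -16 * a ^ 3 + 24 * a ^ 2 - 12 * a + 1 := by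
  rw [spearmanRho, integral_integral_shuffleCa ha₀ ha₁]
  ring

theorem spearmanRho_shuffleCa_eq_footrule (ha₀ : 0 ≤ a) (ha₁ : a ≤ 1 / 2) :
    spearmanRho (shuffleCa a) =
      2 * √3 / 9 * (1 + 2 * spearmanFootrule (shuffleCa a)) ^ ((3:ℝ) / 2) - 1 := by
  have h3 : √3 ^ 2 = 3 := Real.sq_sqrt (by norm_num)
  rw [spearmanRho_shuffleCa ha₀ ha₁, spearmanFootrule_shuffleCa ha₀ ha₁,
    show 1 + 2 * (6 * a ^ 2 - 6 * a + 1) = 3 * (1 - 2 * a) ^ 2 by ring,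
    three_mul_sq_rpow_three_halves (by linarith)]
  linear_combination (-(2 / 3) * (1 - 2 * a) ^ 3) * h3

end ShuffleCa

end

theorem lower_bound_attained :
    (∀ a ∈ Icc (0:ℝ) (1/2),
      IsCopula (shuffleCa a) ∧
      spearmanFootrule (shuffleCa a) = 6 * a ^ 2 - 6 * a + 1 ∧
      spearmanRho (shuffleCa a) = -16 * a ^ 3 + 24 * a ^ 2 - 12 * a + 1 ∧
      spearmanRho (shuffleCa a) =
        2 * Real.sqrt 3 / 9 * (1 + 2 * spearmanFootrule (shuffleCa a)) ^ ((3:ℝ)/2) - 1) ∧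
    (∀ p ∈ Icc (-(1:ℝ)/2) 1, ∃ C : ℝ → ℝ → ℝ, IsCopula C ∧
      spearmanFootrule C = p ∧
      spearmanRho C = 2 * Real.sqrt 3 / 9 * (1 + 2 * p) ^ ((3:ℝ)/2) - 1) := by
  refine ⟨fun a ⟨ha₀, ha₁⟩ => ⟨isCopula_shuffleCa ha₀ ha₁, spearmanFootrule_shuffleCa ha₀ ha₁,
    spearmanRho_shuffleCa ha₀ ha₁, spearmanRho_shuffleCa_eq_footrule ha₀ ha₁⟩, ?_⟩
  rintro p ⟨hp₀, hp₁⟩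
  set s := √((1 + 2 * p) / 3)
  have hs₀ : 0 ≤ s := Real.sqrt_nonneg _
  have hs₁ : s ≤ 1 := Real.sqrt_le_one.mpr (by linarith)
  have hs_sq : s ^ 2 = (1 + 2 * p) / 3 := Real.sq_sqrt (by linarith)
  have ha₀ : 0 ≤ (1 - s) / 2 := by linarith
  have ha₁ : (1 - s) / 2 ≤ 1 / 2 := by linarith
  have hφ : spearmanFootrule (shuffleCa ((1 - s) / 2)) = p := by
    rw [spearmanFootrule_shuffleCa ha₀ ha₁]
    linear_combination (3 / 2) * hs_sq
  exact ⟨_, isCopula_shuffleCa ha₀ ha₁, hφ, hφ ▸ spearmanRho_shuffleCa_eq_footrule ha₀ ha₁⟩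
end

section
/- For every positive integer n there exists a bivariate copula C such that φ(C) = 1 − 3/(2n) and ρ(C) = 1 − 3/(2n²); in particular ρ(C) = 1 − (2/3)·(1 − φ(C))², so the upper bound for ρ given φ is attained at the values φ = 1 − 3/(2n). -/
open MeasureTheory Set

noncomputable section

/-!
The copula is the straight shuffle of `M` by the permutation of `{0, …, 2n - 1}` exchanging `2k`
and `2k + 1`: its mass lies uniformly on `2n` diagonal segments of length `1 / (2n)`. For the
straight shuffle of `M` by any permutation `σ` of `m` pieces, integrating cell by cell gives
`ρ = 1 - 6 ∑ (j - σ j)² / m³` and `φ = 1 - 3 ∑ |j - σ j| / m²`. Here every displacement `j - σ j`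
is `±1`, so `φ = 1 - 3 / (2n)` and `ρ = 1 - 3 / (2n²)`.
-/

theorem Monotone.map_min_add_map_min_le {α β : Type*} [LinearOrder α] [AddCommMonoid β]
    [PartialOrder β] [IsOrderedAddMonoid β] {φ : α → β} (hφ : Monotone φ) {x₁ x₂ y₁ y₂ : α}
    (hx : x₁ ≤ x₂) (hy : y₁ ≤ y₂) :
    φ (min x₂ y₁) + φ (min x₁ y₂) ≤ φ (min x₁ y₁) + φ (min x₂ y₂) := by
  rcases le_total x₁ y₁ with h | h
  · rw [min_eq_left h, min_eq_left (h.trans hy), add_comm]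
    exact add_le_add le_rfl (hφ (min_le_min_left _ hy))
  · rw [min_eq_right h, min_eq_right (h.trans hx)]
    exact add_le_add le_rfl (hφ (min_le_min_right _ hx))

namespace Copula

open intervalIntegral

/-- The length of `[c, c + h] ∩ (-∞, x]`. -/
def ramp (c h x : ℝ) : ℝ := max 0 (min (x - c) h)

section Ramp

variable {c h x : ℝ}

theorem ramp_nonneg : 0 ≤ ramp c h x := le_max_left _ _

theorem ramp_le (hh : 0 ≤ h) : ramp c h x ≤ h := max_le hh (min_le_right _ _)

theorem ramp_of_le (hx : x ≤ c) : ramp c h x = 0 :=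
  max_eq_left ((min_le_left _ _).trans (by linarith))

theorem ramp_of_mem_Icc (hx : x ∈ Icc c (c + h)) : ramp c h x = x - c := by
  rw [ramp, min_eq_left (by linarith [hx.2]), max_eq_right (by linarith [hx.1])]

theorem ramp_of_add_le (hh : 0 ≤ h) (hx : c + h ≤ x) : ramp c h x = h := by
  rw [ramp, min_eq_right (by linarith), max_eq_right hh]

theorem ramp_eq_min_sub_min (hh : 0 ≤ h) : ramp c h x = min x (c + h) - min x c := by
  rcases le_total x c with hxc | hcx
  · rw [ramp_of_le hxc, min_eq_left hxc, min_eq_left (by linarith)]; ring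
  rcases le_total x (c + h) with hxh | hhx
  · rw [ramp_of_mem_Icc ⟨hcx, hxh⟩, min_eq_left hxh, min_eq_right hcx]
  · rw [ramp_of_add_le hh hhx, min_eq_right hhx, min_eq_right hcx]; ring

@[fun_prop]
theorem continuous_ramp (c h : ℝ) : Continuous (ramp c h) := by
  unfold ramp; fun_prop

theorem monotone_ramp (c h : ℝ) : Monotone (ramp c h) := fun _ _ hxy => by
  unfold ramp; gcongr

theorem integral_ramp_pow {k : ℕ} (hk : k ≠ 0) (hh : 0 ≤ h) (hc : 0 ≤ c) (hch : c + h ≤ 1) :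
    ∫ x in (0:ℝ)..1, ramp c h x ^ k = h ^ (k + 1) / (k + 1) + h ^ k * (1 - c - h) := by
  have hint (a b : ℝ) : IntervalIntegrable (fun x => ramp c h x ^ k) volume a b :=
    (by fun_prop : Continuous fun x => ramp c h x ^ k).intervalIntegrable a b
  rw [← integral_add_adjacent_intervals (hint 0 c) (hint c 1),
    ← integral_add_adjacent_intervals (hint c (c + h)) (hint (c + h) 1)]
  have below : ∫ x in (0:ℝ)..c, ramp c h x ^ k = 0 := by
    rw [integral_congr (g := fun _ => 0) fun x hx => ?_, intervalIntegral.integral_zero]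
    rw [uIcc_of_le hc] at hx
    simp [ramp_of_le hx.2, hk]
  have within : ∫ x in c..c + h, ramp c h x ^ k = h ^ (k + 1) / (k + 1) := by
    rw [integral_congr (g := fun x => (x - c) ^ k) fun x hx => ?_,
      integral_comp_sub_right (fun x => x ^ k), integral_pow]
    · simp [hk]
    · rw [uIcc_of_le (by linarith)] at hx
      simp only [ramp_of_mem_Icc hx]
  have above : ∫ x in c + h..1, ramp c h x ^ k = h ^ k * (1 - c - h) := by
    rw [integral_congr (g := fun _ => h ^ k) fun x hx => ?_, intervalIntegral.integral_const,
      smul_eq_mul]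
    · ring
    · rw [uIcc_of_le hch] at hx
      simp only [ramp_of_add_le hh hx.1]
  rw [below, within, above, zero_add]

theorem integral_ramp (hh : 0 ≤ h) (hc : 0 ≤ c) (hch : c + h ≤ 1) :
    ∫ x in (0:ℝ)..1, ramp c h x = h * (1 - c) - h ^ 2 / 2 := by
  have := integral_ramp_pow one_ne_zero hh hc hch
  simp only [pow_one, Nat.cast_one] at this
  rw [this]; ring

end Ramp

/-- Mass of `(-∞, u] × (-∞, v]` under the uniform measure of total mass `h` on the segment from
`(a, b)` to `(a + h, b + h)`: the point `(a + t, b + t)` lies there iff `t ≤ min (u - a) (v - b)`. -/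
def segMass (a b h u v : ℝ) : ℝ := ramp 0 h (min (u - a) (v - b))

section SegMass

variable {a b h u v : ℝ}

theorem segMass_nonneg : 0 ≤ segMass a b h u v := ramp_nonneg

theorem segMass_comm : segMass a b h u v = segMass b a h v u := by
  rw [segMass, segMass, min_comm]

theorem segMass_eq_ramp_ramp : segMass a b h u v = ramp b (ramp a h u) v := by
  simp only [segMass, ramp, sub_zero]
  rcases le_total (min (u - a) h) 0 with hs | hs
  · rw [max_eq_left hs, max_eq_left (min_le_right _ _),
      max_eq_left ((min_le_min_right h (min_le_left _ _)).trans hs)]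
  · rw [max_eq_right hs, min_right_comm, min_comm (v - b)]

theorem segMass_of_le_right (hv : v ≤ b) : segMass a b h u v = 0 :=
  ramp_of_le ((min_le_right _ _).trans (by linarith))

theorem segMass_of_add_le_right (hh : 0 ≤ h) (hv : b + h ≤ v) :
    segMass a b h u v = ramp a h u := by
  have hs : ramp a h u ≤ h := ramp_le hh
  rw [segMass_eq_ramp_ramp, ramp_of_add_le ramp_nonneg (by linarith)]

theorem segMass_self : segMass a b h u u = ramp (max a b) h u := by
  rw [segMass, min_sub_sub_left, ramp, ramp, sub_zero]

theorem monotone_segMass_right : Monotone (segMass a b h u) := fun _ _ hv =>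
  monotone_ramp 0 h (min_le_min_left _ (by linarith))

theorem segMass_add_segMass_le {u₁ u₂ v₁ v₂ : ℝ} (hu : u₁ ≤ u₂) (hv : v₁ ≤ v₂) :
    segMass a b h u₂ v₁ + segMass a b h u₁ v₂ ≤ segMass a b h u₁ v₁ + segMass a b h u₂ v₂ :=
  (monotone_ramp 0 h).map_min_add_map_min_le (by linarith) (by linarith)

theorem continuous_segMass (a b h : ℝ) : Continuous (Function.uncurry (segMass a b h)) := by
  unfold segMass; fun_prop

theorem integral_segMass_right (hh : 0 ≤ h) (hb : 0 ≤ b) (hbh : b + h ≤ 1) :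
    ∫ v in (0:ℝ)..1, segMass a b h u v = ramp a h u * (1 - b) - ramp a h u ^ 2 / 2 := by
  have hs : ramp a h u ≤ h := ramp_le hh
  simp_rw [segMass_eq_ramp_ramp]
  rw [integral_ramp ramp_nonneg hb (by linarith)]

theorem integral_integral_segMass (hh : 0 ≤ h) (ha : 0 ≤ a) (hah : a + h ≤ 1) (hb : 0 ≤ b)
    (hbh : b + h ≤ 1) :
    ∫ u in (0:ℝ)..1, ∫ v in (0:ℝ)..1, segMass a b h u v
      = h * (1 - a) * (1 - b) - h ^ 2 * (2 - a - b) / 2 + h ^ 3 / 3 := by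
  simp_rw [integral_segMass_right hh hb hbh]
  rw [intervalIntegral.integral_sub ((by fun_prop : Continuous _).intervalIntegrable _ _)
      ((by fun_prop : Continuous _).intervalIntegrable _ _), intervalIntegral.integral_mul_const,
    intervalIntegral.integral_div, integral_ramp hh ha hah,
    integral_ramp_pow two_ne_zero hh ha hah]
  push_cast
  ring

theorem integral_segMass_self (hh : 0 ≤ h) (ha : 0 ≤ a) (hah : a + h ≤ 1) (hbh : b + h ≤ 1) :
    ∫ u in (0:ℝ)..1, segMass a b h u u = h * (1 - max a b) - h ^ 2 / 2 := by
  simp_rw [segMass_self]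
  exact integral_ramp hh (le_max_of_le_left ha) (max_add_add_right a b h ▸ max_le hah hbh)

end SegMass

section Grid

variable {m : ℕ}

theorem sum_grid_telescope (hm : m ≠ 0) (F : ℝ → ℝ) :
    ∑ j : Fin m, (F ((j : ℝ) / m + 1 / m) - F ((j : ℝ) / m)) = F 1 - F 0 := by
  have hm' : (m : ℝ) ≠ 0 := Nat.cast_ne_zero.mpr hm
  have hsucc (j : ℕ) : (j : ℝ) / m + 1 / m = ((j + 1 : ℕ) : ℝ) / m := by push_cast; ring
  simp_rw [hsucc]
  rw [Fin.sum_univ_eq_sum_range (fun j => F ((j + 1 : ℕ) / m) - F (j / m)) m,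
    Finset.sum_range_sub (fun j : ℕ => F (j / m))]
  simp [hm']

theorem grid_add_le_one (j : Fin m) : (j : ℝ) / m + 1 / m ≤ 1 := by
  have hm : (0 : ℝ) < m := by exact_mod_cast j.pos
  rw [← add_div, div_le_one hm]
  exact_mod_cast j.isLt

theorem sum_ramp_grid (hm : m ≠ 0) {x : ℝ} (hx : x ∈ Icc (0:ℝ) 1) :
    ∑ j : Fin m, ramp ((j : ℝ) / m) (1 / m) x = x := by
  simp_rw [ramp_eq_min_sub_min (by positivity : (0:ℝ) ≤ 1 / m)]
  rw [sum_grid_telescope hm (min x), min_eq_left hx.2, min_eq_right hx.1, sub_zero]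

end Grid

/-- The straight shuffle of the comonotone copula `M` by `σ`: mass `1 / m` spread uniformly on each
diagonal segment from `(j / m, σ j / m)` to `((j + 1) / m, (σ j + 1) / m)`. -/
def straightShuffle {m : ℕ} (σ : Equiv.Perm (Fin m)) (u v : ℝ) : ℝ :=
  ∑ j : Fin m, segMass ((j : ℝ) / m) ((σ j : ℝ) / m) (1 / m) u v

section StraightShuffle

variable {m : ℕ} (σ : Equiv.Perm (Fin m))

theorem straightShuffle_nonneg (u v : ℝ) : 0 ≤ straightShuffle σ u v :=
  Finset.sum_nonneg fun _ _ => segMass_nonneg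

theorem straightShuffle_zero_right (u : ℝ) : straightShuffle σ u 0 = 0 :=
  Finset.sum_eq_zero fun _ _ => segMass_of_le_right (by positivity)

theorem straightShuffle_zero_left (v : ℝ) : straightShuffle σ 0 v = 0 :=
  Finset.sum_eq_zero fun _ _ => segMass_comm.trans (segMass_of_le_right (by positivity))

theorem straightShuffle_one_right (hm : m ≠ 0) {u : ℝ} (hu : u ∈ Icc (0:ℝ) 1) :
    straightShuffle σ u 1 = u := by
  unfold straightShuffle
  simp_rw [segMass_of_add_le_right (by positivity) (grid_add_le_one _)]
  exact sum_ramp_grid hm hu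

theorem straightShuffle_one_left (hm : m ≠ 0) {v : ℝ} (hv : v ∈ Icc (0:ℝ) 1) :
    straightShuffle σ 1 v = v := by
  unfold straightShuffle
  simp_rw [segMass_comm (u := 1), segMass_of_add_le_right (by positivity) (grid_add_le_one _)]
  rw [Equiv.sum_comp σ (fun j => ramp ((j : ℝ) / m) (1 / m) v)]
  exact sum_ramp_grid hm hv

theorem monotone_straightShuffle_right (u : ℝ) : Monotone (straightShuffle σ u) :=
  fun _ _ hv => Finset.sum_le_sum fun _ _ => monotone_segMass_right hv

theorem isCopula_straightShuffle (hm : m ≠ 0) : IsCopula (straightShuffle σ) := by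
  refine ⟨fun u hu v hv => ⟨straightShuffle_nonneg σ u v, ?_⟩, fun u hu => ?_, ?_⟩
  · calc straightShuffle σ u v ≤ straightShuffle σ u 1 := monotone_straightShuffle_right σ u hv.2
      _ = u := straightShuffle_one_right σ hm hu
      _ ≤ 1 := hu.2
  · exact ⟨straightShuffle_zero_right σ u, straightShuffle_zero_left σ u,
      straightShuffle_one_right σ hm hu, straightShuffle_one_left σ hm hu⟩
  · intro u₁ u₂ v₁ v₂ _ hu _ _ hv _
    have := Finset.sum_le_sum fun (j : Fin m) (_ : j ∈ Finset.univ) =>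
      segMass_add_segMass_le (a := ((j : ℝ) / m)) (b := ((σ j : ℝ) / m)) (h := 1 / m) hu hv
    simp only [Finset.sum_add_distrib] at this
    unfold straightShuffle
    linarith

theorem integral_integral_straightShuffle :
    ∫ u in (0:ℝ)..1, ∫ v in (0:ℝ)..1, straightShuffle σ u v
      = ∑ j : Fin m, ∫ u in (0:ℝ)..1, ∫ v in (0:ℝ)..1,
          segMass ((j : ℝ) / m) ((σ j : ℝ) / m) (1 / m) u v := by
  have hcont (j : Fin m) := continuous_segMass ((j : ℝ) / m) ((σ j : ℝ) / m) (1 / m)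
  simp only [straightShuffle]
  rw [← intervalIntegral.integral_finsetSum fun j _ =>
    (continuous_parametric_intervalIntegral_of_continuous' (hcont j) 0 1).intervalIntegrable _ _]
  refine intervalIntegral.integral_congr fun u _ => ?_
  exact intervalIntegral.integral_finsetSum fun j _ =>
    ((hcont j).comp (Continuous.prodMk_right u)).intervalIntegrable _ _

theorem integral_straightShuffle_self :
    ∫ u in (0:ℝ)..1, straightShuffle σ u u
      = ∑ j : Fin m, ∫ u in (0:ℝ)..1, segMass ((j : ℝ) / m) ((σ j : ℝ) / m) (1 / m) u u := by
  refine intervalIntegral.integral_finsetSum fun j _ => Continuous.intervalIntegrable ?_ _ _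
  exact (continuous_segMass _ _ _).comp (continuous_id.prodMk continuous_id)

theorem spearmanRho_straightShuffle (hm : m ≠ 0) :
    spearmanRho (straightShuffle σ) = 1 - 6 * (∑ j : Fin m, ((j : ℝ) - σ j) ^ 2) / m ^ 3 := by
  have hm' : (m : ℝ) ≠ 0 := Nat.cast_ne_zero.mpr hm
  -- The terms depending on `j` or on `σ j` alone telescope, as the cells `[j / m, (j + 1) / m]`
  -- tile `[0, 1]`; only the displacements `j - σ j` remain.
  set F : ℝ → ℝ := fun a => -(1 - a) ^ 3 / 3
  have hcell (j : Fin m) : ∫ u in (0:ℝ)..1, ∫ v in (0:ℝ)..1,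
      segMass ((j : ℝ) / m) ((σ j : ℝ) / m) (1 / m) u v
      = ((F ((j : ℝ) / m + 1 / m) - F ((j : ℝ) / m))
          + (F ((σ j : ℝ) / m + 1 / m) - F ((σ j : ℝ) / m))) / 2
        - ((j : ℝ) - σ j) ^ 2 / (2 * m ^ 3) := by
    rw [integral_integral_segMass (by positivity) (by positivity) (grid_add_le_one j)
      (by positivity) (grid_add_le_one (σ j))]
    simp only [F]
    field_simp
    ring
  rw [spearmanRho, integral_integral_straightShuffle, Finset.sum_congr rfl fun j _ => hcell j,
    Finset.sum_sub_distrib, ← Finset.sum_div, Finset.sum_add_distrib,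
    Equiv.sum_comp σ (fun j => F ((j : ℝ) / m + 1 / m) - F ((j : ℝ) / m)),
    sum_grid_telescope hm, ← Finset.sum_div]
  simp only [F]
  field_simp
  ring

theorem spearmanFootrule_straightShuffle (hm : m ≠ 0) :
    spearmanFootrule (straightShuffle σ) = 1 - 3 * (∑ j : Fin m, |(j : ℝ) - σ j|) / m ^ 2 := by
  have hm' : (0 : ℝ) < m := by positivity
  set F : ℝ → ℝ := fun a => -(1 - a) ^ 2 / 2
  have hcell (j : Fin m) :
      ∫ u in (0:ℝ)..1, segMass ((j : ℝ) / m) ((σ j : ℝ) / m) (1 / m) u u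
      = ((F ((j : ℝ) / m + 1 / m) - F ((j : ℝ) / m))
          + (F ((σ j : ℝ) / m + 1 / m) - F ((σ j : ℝ) / m))) / 2
        - |(j : ℝ) - σ j| / (2 * m ^ 2) := by
    have hmax (a b : ℝ) : max a b = (a + b + |a - b|) / 2 := by
      linarith [min_add_max a b, max_sub_min_eq_abs' a b]
    rw [integral_segMass_self (by positivity) (by positivity) (grid_add_le_one j)
      (grid_add_le_one (σ j)), hmax, ← sub_div, abs_div, abs_of_pos hm']
    simp only [F]
    field_simp
    ring
  rw [spearmanFootrule, integral_straightShuffle_self, Finset.sum_congr rfl fun j _ => hcell j,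
    Finset.sum_sub_distrib, ← Finset.sum_div, Finset.sum_add_distrib,
    Equiv.sum_comp σ (fun j => F ((j : ℝ) / m + 1 / m) - F ((j : ℝ) / m)),
    sum_grid_telescope hm, ← Finset.sum_div]
  simp only [F]
  field_simp
  ring

end StraightShuffle

/-- Exchanges `2 * k` and `2 * k + 1` for every `k < n`. -/
def swapPairs (n : ℕ) : Equiv.Perm (Fin (n * 2)) :=
  finProdFinEquiv.permCongr (Equiv.prodCongr (Equiv.refl (Fin n)) (Equiv.swap 0 1))

theorem abs_sub_swapPairs {n : ℕ} (j : Fin (n * 2)) : |(j : ℝ) - swapPairs n j| = 1 := by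
  obtain ⟨⟨k, i⟩, rfl⟩ := finProdFinEquiv.surjective j
  fin_cases i <;> simp [swapPairs, Equiv.permCongr_apply]

end Copula

open Copula

theorem upper_bound_attained_at_special_values (n : ℕ) (hn : 0 < n) :
    ∃ C : ℝ → ℝ → ℝ, IsCopula C ∧
      spearmanFootrule C = 1 - 3 / (2 * (n:ℝ)) ∧
      spearmanRho C = 1 - 3 / (2 * (n:ℝ)^2) ∧
      spearmanRho C = 1 - 2/3 * (1 - spearmanFootrule C) ^ 2 := by
  have hm : n * 2 ≠ 0 := by positivity
  have hφ : spearmanFootrule (straightShuffle (swapPairs n)) = 1 - 3 / (2 * (n:ℝ)) := by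
    rw [spearmanFootrule_straightShuffle _ hm]
    simp only [abs_sub_swapPairs, Finset.sum_const, Finset.card_fin, nsmul_eq_mul, mul_one]
    push_cast
    field_simp
  have hρ : spearmanRho (straightShuffle (swapPairs n)) = 1 - 3 / (2 * (n:ℝ)^2) := by
    rw [spearmanRho_straightShuffle _ hm,
      Finset.sum_congr rfl fun j _ => by rw [← sq_abs, abs_sub_swapPairs, one_pow]]
    simp only [Finset.sum_const, Finset.card_fin, nsmul_eq_mul, mul_one]
    push_cast
    field_simp
    ring
  refine ⟨_, isCopula_straightShuffle _ hm, hφ, hρ, ?_⟩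
  rw [hφ, hρ]
  field_simp
  ring

end
end

section
/- Let C be a bivariate copula concentrated on the two diagonals with diagonal δ(u) = C(u,u). Then for every u ∈ [0, 1/2] one has δ(1−u) = 1 − 2u + δ(u), and C equals its survival copula, i.e. C(u,v) = u + v − 1 + C(1−u, 1−v) for all u, v ∈ [0,1]. -/
open MeasureTheory Set

noncomputable section

/-- A copula whose mass is concentrated on the main and opposite diagonal:
its values are determined by its diagonal `δ(u) = C(u,u)` as stated. -/
def ConcentratedOnDiagonals (C : ℝ → ℝ → ℝ) : Prop :=
  ∀ u ∈ Icc (0:ℝ) 1, ∀ v ∈ Icc (0:ℝ) 1,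
    (u ≤ v → v ≤ 1 - u → C u v = C u u) ∧
    (v ≤ u → u ≤ 1 - v → C u v = C v v) ∧
    (1 - u ≤ v → v ≤ u → C u v = C u u + v - u) ∧
    (1 - v ≤ u → u ≤ v → C u v = C v v + u - v)

/-!
On the antidiagonal `u + v = 1` the formula valid below it and the one valid above it both
apply; comparing them at `(1 - u, u)` links `δ(1 - u)` to `δ(u)`. With that relation, the
survival identity is checked region by region below the antidiagonal, and the point reflection
`(u, v) ↦ (1 - u, 1 - v)` carries it to the region above.
-/

namespace ConcentratedOnDiagonals

variable {C : ℝ → ℝ → ℝ}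

theorem diag_one_sub (hD : ConcentratedOnDiagonals C) {u : ℝ} (hu : u ∈ Icc (0:ℝ) 1) :
    C (1 - u) (1 - u) = 1 - 2 * u + C u u := by
  have hu' := Icc.mem_iff_one_sub_mem.mp hu
  rcases le_total u (1/2) with h | h
  · have below := (hD (1 - u) hu' u hu).2.1 (by linarith) (by linarith)
    have above := (hD (1 - u) hu' u hu).2.2.1 (by linarith) (by linarith)
    linarith
  · have below := (hD u hu (1 - u) hu').2.1 (by linarith) (by linarith)
    have above := (hD u hu (1 - u) hu').2.2.1 (by linarith) (by linarith)
    linarith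

theorem survival_of_add_le_one (hD : ConcentratedOnDiagonals C) {u v : ℝ}
    (hu : u ∈ Icc (0:ℝ) 1) (hv : v ∈ Icc (0:ℝ) 1) (huv : u + v ≤ 1) :
    C u v = u + v - 1 + C (1 - u) (1 - v) := by
  have hu' := Icc.mem_iff_one_sub_mem.mp hu
  have hv' := Icc.mem_iff_one_sub_mem.mp hv
  rcases le_total u v with h | h
  · have e := (hD u hu v hv).1 h (by linarith)
    have e' := (hD (1 - u) hu' (1 - v) hv').2.2.1 (by linarith) (by linarith)
    have d := hD.diag_one_sub hu
    linarith
  · have e := (hD u hu v hv).2.1 h (by linarith)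
    have e' := (hD (1 - u) hu' (1 - v) hv').2.2.2 (by linarith) (by linarith)
    have d := hD.diag_one_sub hv
    linarith

theorem survival (hD : ConcentratedOnDiagonals C) {u v : ℝ}
    (hu : u ∈ Icc (0:ℝ) 1) (hv : v ∈ Icc (0:ℝ) 1) :
    C u v = u + v - 1 + C (1 - u) (1 - v) := by
  rcases le_total (u + v) 1 with h | h
  · exact hD.survival_of_add_le_one hu hv h
  · have e := hD.survival_of_add_le_one (Icc.mem_iff_one_sub_mem.mp hu)
      (Icc.mem_iff_one_sub_mem.mp hv) (by linarith)
    simp only [sub_sub_cancel] at e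
    linarith

end ConcentratedOnDiagonals

theorem diagonal_symmetry_and_survival_general (C : ℝ → ℝ → ℝ)
    (hD : ConcentratedOnDiagonals C) :
    (∀ u ∈ Icc (0:ℝ) (1/2), C (1-u) (1-u) = 1 - 2*u + C u u) ∧
    (∀ u ∈ Icc (0:ℝ) 1, ∀ v ∈ Icc (0:ℝ) 1, C u v = u + v - 1 + C (1-u) (1-v)) :=
  ⟨fun _ hu => hD.diag_one_sub ⟨hu.1, by linarith [hu.2]⟩,
    fun _ hu _ hv => hD.survival hu hv⟩

theorem diagonal_symmetry_and_survival (C : ℝ → ℝ → ℝ) (hC : IsCopula C)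
    (hD : ConcentratedOnDiagonals C) :
    (∀ u ∈ Icc (0:ℝ) (1/2), C (1-u) (1-u) = 1 - 2*u + C u u) ∧
    (∀ u ∈ Icc (0:ℝ) 1, ∀ v ∈ Icc (0:ℝ) 1, C u v = u + v - 1 + C (1-u) (1-v)) :=
  diagonal_symmetry_and_survival_general C hD
end
end

section
/- Let C be a bivariate copula concentrated on the two diagonals with diagonal δ(u) = C(u,u), let α(u) = ∫₀ᵘ δ(t) dt, and let p = φ(C). Then for every u ∈ [0, 1/2] one has α(1−u) = 2·α(1/2) − α(u) + (1−2u)²/4; moreover α(1) = (p+2)/6 and α(1/2) = (2p+1)/24. -/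
open MeasureTheory Set

noncomputable section

/-!
On the anti-diagonal two of the four defining formulas of `C` meet, which forces the diagonal
to satisfy `δ(1 - u) = δ(u) + 1 - 2u`. Integrating this reflection identity over `[u, 1/2]`
gives the symmetry of `α`; at `u = 0` it relates `α(1/2)` to `α(1) = ∫₀¹ δ`, which is
`(p + 2)/6` by the definition of the footrule.
-/

theorem IsCopula.monotoneOn_diag {C : ℝ → ℝ → ℝ} (hC : IsCopula C) :
    MonotoneOn (fun t => C t t) (Icc 0 1) := by
  obtain ⟨-, hbdry, h2inc⟩ := hC
  intro a ha b hb hab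
  -- add the 2-increasing inequalities on the rectangles `[a,b] × [0,a]` and `[0,b] × [a,b]`
  have h₁ := h2inc a b 0 a ha.1 hab hb.2 le_rfl ha.1 ha.2
  have h₂ := h2inc 0 b a b le_rfl hb.1 hb.2 ha.1 hab hb.2
  have hb0 := (hbdry b hb).1
  have ha0 := (hbdry a ha).1
  have h0b := (hbdry b hb).2.1
  have h0a := (hbdry a ha).2.1
  dsimp only
  linarith

theorem IsCopula.intervalIntegrable_diag_s10 {C : ℝ → ℝ → ℝ} (hC : IsCopula C) :
    IntervalIntegrable (fun t => C t t) volume 0 1 :=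
  (hC.monotoneOn_diag.mono (by rw [uIcc_of_le zero_le_one])).intervalIntegrable

theorem ConcentratedOnDiagonals.diag_one_sub_s10 {C : ℝ → ℝ → ℝ} (hD : ConcentratedOnDiagonals C)
    {u : ℝ} (hu : u ∈ Icc (0:ℝ) 1) : C (1 - u) (1 - u) = C u u + 1 - 2 * u := by
  have hu' : 1 - u ∈ Icc (0:ℝ) 1 := ⟨by linarith [hu.2], by linarith [hu.1]⟩
  -- `(1 - u, u)` and `(u, 1 - u)` lie on the anti-diagonal, where two of the four formulas apply
  rcases le_total u (1 / 2) with hle | hge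
  · obtain ⟨-, hlow, hhigh, -⟩ := hD (1 - u) hu' u hu
    linarith [hlow (by linarith) (by linarith), hhigh (by linarith) (by linarith)]
  · obtain ⟨-, hlow, hhigh, -⟩ := hD u hu (1 - u) hu'
    linarith [hlow (by linarith) (by linarith), hhigh (by linarith) (by linarith)]

theorem integral_zero_one_sub_of_map_one_sub {f : ℝ → ℝ}
    (hf : IntervalIntegrable f volume 0 1)
    (hrefl : ∀ s ∈ Icc (0:ℝ) (1 / 2), f (1 - s) = f s + 1 - 2 * s)
    {u : ℝ} (hu : u ∈ Icc (0:ℝ) (1 / 2)) :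
    ∫ t in (0:ℝ)..(1 - u), f t
      = 2 * (∫ t in (0:ℝ)..(1 / 2), f t) - (∫ t in (0:ℝ)..u, f t) + (1 - 2 * u) ^ 2 / 4 := by
  obtain ⟨hu0, hu2⟩ := hu
  have hint : ∀ a b : ℝ, 0 ≤ a → a ≤ 1 → 0 ≤ b → b ≤ 1 → IntervalIntegrable f volume a b :=
    fun a b ha0 ha1 hb0 hb1 => hf.mono_set (uIcc_subset_uIcc (by simp [ha0, ha1])
      (by simp [hb0, hb1]))
  have hlin : ∫ s in u..(1 / 2 : ℝ), (1 - 2 * s) = (1 - 2 * u) ^ 2 / 4 := by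
    rw [intervalIntegral.integral_sub intervalIntegrable_const
      ((continuous_const_mul 2).intervalIntegrable _ _),
      intervalIntegral.integral_const_mul, integral_id, intervalIntegral.integral_const]
    simp only [one_div, smul_eq_mul, mul_one, inv_pow]
    ring
  have hreflect : ∫ t in (1 / 2 : ℝ)..(1 - u), f t
      = (∫ s in u..(1 / 2 : ℝ), f s) + ∫ s in u..(1 / 2 : ℝ), (1 - 2 * s) := calc
    ∫ t in (1 / 2 : ℝ)..(1 - u), f t = ∫ s in u..(1 / 2 : ℝ), f (1 - s) := by
      rw [intervalIntegral.integral_comp_sub_left f 1]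
      norm_num
    _ = ∫ s in u..(1 / 2 : ℝ), (f s + (1 - 2 * s)) := by
      refine intervalIntegral.integral_congr fun s hs => ?_
      rw [uIcc_of_le hu2] at hs
      rw [hrefl s ⟨hu0.trans hs.1, hs.2⟩]
      ring
    _ = _ := intervalIntegral.integral_add (hint u (1 / 2) hu0 (by linarith) (by norm_num)
      (by norm_num)) ((by fun_prop : Continuous fun s : ℝ => 1 - 2 * s).intervalIntegrable _ _)
  rw [← intervalIntegral.integral_add_adjacent_intervals
      (hint 0 (1 / 2) le_rfl zero_le_one (by norm_num) (by norm_num))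
      (hint (1 / 2) (1 - u) (by norm_num) (by norm_num) (by linarith) (by linarith)),
    hreflect, hlin, ← intervalIntegral.integral_interval_sub_left
      (hint 0 (1 / 2) le_rfl zero_le_one (by norm_num) (by norm_num))
      (hint 0 u le_rfl zero_le_one hu0 (by linarith))]
  ring

theorem alpha_symmetry_and_values (C : ℝ → ℝ → ℝ) (hC : IsCopula C)
    (hD : ConcentratedOnDiagonals C)
    (α : ℝ → ℝ) (hα : ∀ u : ℝ, α u = ∫ t in (0:ℝ)..u, C t t)
    (p : ℝ) (hp : p = spearmanFootrule C) :
    (∀ u ∈ Icc (0:ℝ) (1/2), α (1-u) = 2 * α (1/2) - α u + (1 - 2*u)^2 / 4) ∧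
    α 1 = (p + 2) / 6 ∧ α (1/2) = (2*p + 1) / 24 := by
  have hsym : ∀ u ∈ Icc (0:ℝ) (1/2), α (1-u) = 2 * α (1/2) - α u + (1 - 2*u)^2 / 4 := by
    intro u hu
    simp only [hα]
    exact integral_zero_one_sub_of_map_one_sub hC.intervalIntegrable_diag_s10
      (fun s hs => hD.diag_one_sub_s10 ⟨hs.1, hs.2.trans (by norm_num)⟩) hu
  have hα1 : α 1 = (p + 2) / 6 := by
    rw [hp, spearmanFootrule, hα]
    ring
  have hα0 : α 0 = 0 := by simp [hα]
  have hhalf := hsym 0 ⟨le_rfl, by norm_num⟩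
  norm_num [hα0] at hhalf
  exact ⟨hsym, hα1, by linarith⟩
end
end
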